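/- Let D ⊆ {0,1}^n with |D| = 2^{nδ} for 0 ≤ δ < 1, let M be uniform on {0,1}^n, and let X_W be the eavesdropper's single-link observation under the modified one-time pad (X_W = M if M ∈ D; otherwise X_W uniform on D^c, independent of M given M ∉ D). Then I(M; X_W) = H₂(2^{nδ}/2^n) + (2^{nδ}/2^n)·log₂(2^{nδ}), where H₂ is the binary entropy function; in particular I(M; X_W) → 0 as n → ∞ for fixed δ < 1. -/

import Mathlib

open Finset Real Filter

/-- Mutual information (in bits) computed from a joint pmf on `α × β`. -/
noncomputable def mutualInfo {α β : Type*} [Fintype α] [Fintype β] (p : α × β → ℝ) : ℝ :=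
  ∑ m : α, ∑ x : β,
    p (m, x) * Real.logb 2 (p (m, x) / ((∑ y, p (m, y)) * (∑ m', p (m', x))))

/-- Binary entropy function (in bits). -/
noncomputable def binEnt (p : ℝ) : ℝ :=
  -(p * Real.logb 2 p) - (1 - p) * Real.logb 2 (1 - p)

/-- Joint pmf of (message, single-link observation) for the modified one-time
pad: `M` uniform on `{0,1}^n`; if `M ∈ D` the observation equals `M`, otherwise
the observation is uniform on `Dᶜ`, independent of `M`. -/
noncomputable def jointOTP (n d : ℕ) (D : Finset (Fin n → Bool)) :
    (Fin n → Bool) × (Fin n → Bool) → ℝ := fun mx =>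
  if mx.1 ∈ D then (if mx.2 = mx.1 then (1 : ℝ) / 2 ^ n else 0)
  else (if mx.2 ∈ D then 0 else ((1 : ℝ) / 2 ^ n) * (1 / ((2 : ℝ) ^ n - 2 ^ d)))

/-!
The joint pmf is symmetric and each row sums to `2⁻ⁿ`, so both marginals are uniform; each
row is moreover constant on its support, with value `2⁻ⁿ` for `m ∈ D` and
`2⁻ⁿ / (2ⁿ - 2ᵈ)` otherwise. Hence `I(M; X_W) = q · n + (1 - q) · log₂ (2ⁿ / (2ⁿ - 2ᵈ))` with
`q = 2ᵈ / 2ⁿ`, which rearranges to `H₂(q) + q · d`. For the limit, `q = r ^ N` with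
`r = 2 ^ (δ - 1) < 1`: the entropy term vanishes by continuity of `H₂` at `0`, and
`q · δN` by geometric decay.
-/

lemma sum_mul_logb_div_of_forall_eq_zero_or_eq {ι : Type*} (s : Finset ι) (f : ι → ℝ)
    (b v c : ℝ) (hf : ∀ i ∈ s, f i = 0 ∨ f i = v) :
    ∑ i ∈ s, f i * logb b (f i / c) = (∑ i ∈ s, f i) * logb b (v / c) := by
  rw [Finset.sum_mul]
  refine Finset.sum_congr rfl fun i hi => ?_
  rcases hf i hi with h | h <;> simp [h]

lemma mutualInfo_eq_of_const_marginals {α β : Type*} [Fintype α] [Fintype β]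
    (p : α × β → ℝ) (a b : ℝ) (v : α → ℝ) (hrow : ∀ m, ∑ x, p (m, x) = a)
    (hcol : ∀ x, ∑ m, p (m, x) = b) (hv : ∀ m x, p (m, x) = 0 ∨ p (m, x) = v m) :
    mutualInfo p = ∑ m, a * logb 2 (v m / (a * b)) := by
  unfold mutualInfo
  simp only [hrow, hcol]
  refine Finset.sum_congr rfl fun m _ => ?_
  rw [sum_mul_logb_div_of_forall_eq_zero_or_eq _ _ _ (v m) _ fun x _ => hv m x, hrow]

lemma binEnt_eq_binEntropy_div_log_two (p : ℝ) : binEnt p = binEntropy p / log 2 := by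
  simp only [binEnt, binEntropy, logb, log_inv]
  ring

lemma tendsto_binEnt_nhds_zero : Tendsto binEnt (nhds 0) (nhds 0) := by
  have h := (binEntropy_continuous.div_const (log 2)).tendsto 0
  simpa [← binEnt_eq_binEntropy_div_log_two] using h

lemma binEnt_div_add_div_mul_logb {K N : ℝ} (hK : 0 < K) (hKN : K < N) :
    binEnt (K / N) + K / N * logb 2 K =
      K / N * logb 2 N + (1 - K / N) * logb 2 (N / (N - K)) := by
  have hN : 0 < N := hK.trans hKN
  have hNK : 0 < N - K := sub_pos.mpr hKN
  have h1 : 1 - K / N = (N - K) / N := by field_simp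
  simp only [binEnt, h1, logb_div hK.ne' hN.ne', logb_div hNK.ne' hN.ne',
    logb_div hN.ne' hNK.ne']
  ring

lemma two_rpow_mul_div_two_rpow (δ : ℝ) (N : ℕ) :
    (2 : ℝ) ^ (δ * N) / (2 : ℝ) ^ (N : ℝ) = ((2 : ℝ) ^ (δ - 1)) ^ N := by
  rw [← rpow_natCast, ← rpow_mul zero_le_two, ← rpow_sub two_pos]
  ring_nf

lemma tendsto_binEnt_add_mul_logb {δ : ℝ} (hδ : δ < 1) :
    Tendsto (fun N : ℕ =>
        binEnt ((2 : ℝ) ^ (δ * N) / (2 : ℝ) ^ (N : ℝ)) +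
          ((2 : ℝ) ^ (δ * N) / (2 : ℝ) ^ (N : ℝ)) * logb 2 ((2 : ℝ) ^ (δ * N)))
      atTop (nhds 0) := by
  set r : ℝ := (2 : ℝ) ^ (δ - 1)
  have hr0 : 0 < r := rpow_pos_of_pos two_pos _
  have hr1 : r < 1 := rpow_lt_one_of_one_lt_of_neg one_lt_two (by linarith)
  simp only [two_rpow_mul_div_two_rpow, logb_rpow two_pos (by norm_num : (2 : ℝ) ≠ 1)]
  have hpow : Tendsto (fun N : ℕ => r ^ N) atTop (nhds 0) :=
    tendsto_pow_atTop_nhds_zero_of_lt_one hr0.le hr1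
  have hlin : Tendsto (fun N : ℕ => r ^ N * (δ * N)) atTop (nhds 0) := by
    have h := ((summable_pow_mul_geometric_of_norm_lt_one 1 (r := r)
      (by rwa [norm_of_nonneg hr0.le])).tendsto_atTop_zero).const_mul δ
    simp only [pow_one, mul_zero] at h
    convert h using 2 with N
    ring
  simpa using (tendsto_binEnt_nhds_zero.comp hpow).add hlin

section jointOTP

variable {n d : ℕ} {D : Finset (Fin n → Bool)}

lemma jointOTP_swap (m x : Fin n → Bool) : jointOTP n d D (x, m) = jointOTP n d D (m, x) := by
  grind [jointOTP]

lemma jointOTP_eq_zero_or_eq (m x : Fin n → Bool) :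
    jointOTP n d D (m, x) = 0 ∨ jointOTP n d D (m, x) =
      if m ∈ D then 1 / 2 ^ n else 1 / 2 ^ n * (1 / ((2 : ℝ) ^ n - 2 ^ d)) := by
  unfold jointOTP
  split_ifs <;> simp

lemma two_pow_sub_two_pow_pos (hd : d < n) : (0 : ℝ) < 2 ^ n - 2 ^ d :=
  sub_pos.mpr (pow_lt_pow_right₀ one_lt_two hd)

lemma card_compl_of_card_eq_two_pow (hd : d < n) (hD : D.card = 2 ^ d) :
    ((Dᶜ).card : ℝ) = 2 ^ n - 2 ^ d := by
  rw [card_compl, hD, Fintype.card_fun, Fintype.card_bool, Fintype.card_fin,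
    Nat.cast_sub (Nat.pow_le_pow_right two_pos hd.le)]
  push_cast
  rfl

lemma sum_jointOTP_row (hd : d < n) (hD : D.card = 2 ^ d) (m : Fin n → Bool) :
    ∑ x, jointOTP n d D (m, x) = 1 / 2 ^ n := by
  by_cases hm : m ∈ D
  · simp [jointOTP, hm]
  · have hNK := two_pow_sub_two_pow_pos hd
    simp_rw [jointOTP, if_neg hm, ← ite_not (_ ∈ D), ← mem_compl, Fintype.sum_ite_mem, sum_const,
      nsmul_eq_mul, card_compl_of_card_eq_two_pow hd hD]
    field_simp

lemma mutualInfo_jointOTP (hd : d < n) (hD : D.card = 2 ^ d) :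
    mutualInfo (jointOTP n d D) = 2 ^ d / 2 ^ n * logb 2 (2 ^ n) +
      (1 - 2 ^ d / 2 ^ n) * logb 2 ((2 : ℝ) ^ n / (2 ^ n - 2 ^ d)) := by
  have hNK := two_pow_sub_two_pow_pos hd
  rw [mutualInfo_eq_of_const_marginals _ _ _ _ (sum_jointOTP_row hd hD)
    (fun x => by simp_rw [← jointOTP_swap _ x]; exact sum_jointOTP_row hd hD x)
    jointOTP_eq_zero_or_eq]
  simp only [ite_div, apply_ite (logb 2), mul_ite]
  have hv : (1 / 2 ^ n * (1 / (2 ^ n - 2 ^ d))) / (1 / 2 ^ n * (1 / 2 ^ n)) =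
      (2 : ℝ) ^ n / (2 ^ n - 2 ^ d) := by
    field_simp
  rw [Finset.sum_ite, filter_mem_eq_inter, univ_inter, filter_notMem_eq_sdiff,
    ← compl_eq_univ_sdiff]
  simp only [sum_const, nsmul_eq_mul, card_compl_of_card_eq_two_pow hd hD, hD, hv]
  push_cast
  field_simp

end jointOTP

/-- For the modified one-time pad with `|D| = 2^{nδ}` (here `2^d`, `δ = d/n`),
`I(M; X_W) = H₂(2^{nδ}/2^n) + (2^{nδ}/2^n)·log₂(2^{nδ})`; in particular, for
fixed `0 ≤ δ < 1` this quantity tends to `0` as `n → ∞`. -/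
theorem stmt16 (n d : ℕ) (hd : d < n) (D : Finset (Fin n → Bool))
    (hD : D.card = 2 ^ d) :
    mutualInfo (jointOTP n d D) =
        binEnt ((2 : ℝ) ^ d / 2 ^ n) + ((2 : ℝ) ^ d / 2 ^ n) * Real.logb 2 (2 ^ d) ∧
      ∀ δ : ℝ, 0 ≤ δ → δ < 1 →
        Tendsto (fun N : ℕ =>
            binEnt ((2 : ℝ) ^ (δ * N) / (2 : ℝ) ^ (N : ℝ)) +
              ((2 : ℝ) ^ (δ * N) / (2 : ℝ) ^ (N : ℝ)) *
                Real.logb 2 ((2 : ℝ) ^ (δ * N)))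
          atTop (nhds 0) :=
  ⟨by
    rw [mutualInfo_jointOTP hd hD,
      binEnt_div_add_div_mul_logb (by positivity) (pow_lt_pow_right₀ one_lt_two hd)],
    fun _ _ hδ => tendsto_binEnt_add_mul_logb hδ⟩
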